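/- arXiv:1709.03398 — 2 statements merged into one kernel-verified Lean document; each statement's English description precedes it below -/
import Mathlib

section
/- For all a ∈ ℂ \ {-1,-2,-3,...}, ∏_{n≥1} [((n+a)(2n+a+1)²) / ((2n+a)(2n+a+2)(n+a+1))]^{(-1)^{t_n}} = (a+2)/(a+1). -/
open Filter Finset Topology

/-- The Thue–Morse sequence: sum modulo 2 of the binary digits of `n`. -/
def tm (n : ℕ) : ℕ := (Nat.digits 2 n).sum % 2

/-!
Write `r(x) = (x + a) / (x + a + 1)`, `ε n = (-1) ^ t_n` and `s m = r(m) ^ ε m`. The `n`-th factor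
equals `r(n) r(2n + 1) / r(2n)`, and since `ε (2n) = ε n = -ε (2n + 1)` its `ε n`-th power is
`s n / (s (2n) s (2n + 1))`. Hence the partial product up to `N` telescopes to
`s 1 · Q N / Q (2N + 1)` with `Q M = s 1 ⋯ s M`. The pairs `s (2k) s (2k + 1) = (1 - (2k + a + 1)⁻²) ^ ε k`
are nonzero and `1 + O(k⁻²)`, so `Q` converges to a nonzero limit and the product tends to
`s 1 = r(1)⁻¹ = (a + 2) / (a + 1)`.
-/

lemma prod_range_mul_prod_range_two_mul_add_one {M : Type*} [CommMonoid M] {φ h : ℕ → M}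
    (hφ : ∀ m, 0 < m → φ m * (h (2 * m) * h (2 * m + 1)) = h m) (N : ℕ) :
    (∏ n ∈ range N, φ (n + 1)) * ∏ m ∈ range (2 * N + 1), h (m + 1)
      = h 1 * ∏ m ∈ range N, h (m + 1) := by
  induction N with
  | zero => simp
  | succ N ih =>
    rw [prod_range_succ _ N, prod_range_succ _ N, ← hφ (N + 1) N.succ_pos, ← mul_assoc (h 1),
      ← ih, show 2 * (N + 1) + 1 = 2 * N + 1 + 1 + 1 by ring, prod_range_succ _ (2 * N + 1 + 1),
      prod_range_succ _ (2 * N + 1), show 2 * (N + 1) = 2 * N + 1 + 1 by ring]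
    ac_rfl

lemma prod_range_two_mul_add_one {M : Type*} [CommMonoid M] (h : ℕ → M) (K : ℕ) :
    ∏ m ∈ range (2 * K + 1), h (m + 1)
      = h 1 * ∏ k ∈ range K, (h (2 * (k + 1)) * h (2 * (k + 1) + 1)) := by
  induction K with
  | zero => simp
  | succ K ih =>
    rw [show 2 * (K + 1) + 1 = 2 * K + 1 + 1 + 1 by ring, prod_range_succ _ (2 * K + 1 + 1),
      prod_range_succ _ (2 * K + 1), ih, prod_range_succ, mul_assoc, mul_assoc]
    rfl

lemma norm_zpow_neg_one_pow_sub_one_le {K : Type*} [NormedField K] {z : K}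
    (hz : ‖z - 1‖ ≤ 1 / 2) (n : ℕ) : ‖z ^ ((-1 : ℤ) ^ n) - 1‖ ≤ 2 * ‖z - 1‖ := by
  rcases neg_one_pow_eq_or ℤ n with h | h <;> rw [h]
  · rw [zpow_one]; linarith [norm_nonneg (z - 1)]
  · have hz' : 1 / 2 ≤ ‖z‖ := by
      have := norm_sub_norm_le (1 : K) (1 - z)
      rw [sub_sub_cancel, norm_one, norm_sub_rev] at this
      linarith
    have hz0 : z ≠ 0 := norm_pos_iff.1 (by linarith)
    rw [zpow_neg_one, show z⁻¹ - 1 = (1 - z) / z by field_simp, norm_div, norm_sub_rev,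
      div_le_iff₀ (by linarith)]
    nlinarith [norm_nonneg (z - 1)]

lemma tendsto_zpow_neg_one_pow {K ι : Type*} [NormedField K] {l : Filter ι} {z : ι → K}
    (hz : Tendsto z l (𝓝 1)) (t : ι → ℕ) : Tendsto (fun i => z i ^ ((-1 : ℤ) ^ t i)) l (𝓝 1) := by
  rw [tendsto_iff_norm_sub_tendsto_zero] at hz ⊢
  refine squeeze_zero_norm' ?_ (by simpa using hz.const_mul 2)
  filter_upwards [hz.eventually (ge_mem_nhds (by norm_num : (0 : ℝ) < 1 / 2))] with i hi
  rw [norm_norm]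
  exact norm_zpow_neg_one_pow_sub_one_le hi (t i)

lemma summable_norm_inv_natCast_add_sq (c : ℂ) :
    Summable fun n : ℕ => ‖(((n : ℂ) + c) ^ 2)⁻¹‖ := by
  refine .of_norm_bounded_eventually_nat ((Real.summable_nat_pow_inv.2 one_lt_two).mul_left 4) ?_
  filter_upwards [eventually_ge_atTop ⌈2 * ‖c‖⌉₊, eventually_gt_atTop 0] with n hc hn
  have hn0 : (0 : ℝ) < n := by exact_mod_cast hn
  have hn' : (n : ℝ) / 2 ≤ ‖(n : ℂ) + c‖ := by
    have := norm_sub_norm_le (n : ℂ) (-c)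
    rw [norm_neg, sub_neg_eq_add, Complex.norm_natCast] at this
    linarith [Nat.ceil_le.1 hc]
  rw [norm_norm, norm_inv, norm_pow, ← inv_pow, ← inv_pow, show (4 : ℝ) = 2 ^ 2 by norm_num,
    ← mul_pow, ← div_eq_mul_inv]
  gcongr
  rw [inv_le_comm₀ (by linarith) (by positivity), inv_div]
  exact hn'

lemma tendsto_of_tendsto_two_mul_of_tendsto_two_mul_add_one {α : Type*} {f : ℕ → α}
    {l : Filter α} (h₀ : Tendsto (fun n => f (2 * n)) atTop l)
    (h₁ : Tendsto (fun n => f (2 * n + 1)) atTop l) : Tendsto f atTop l := by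
  intro s hs
  obtain ⟨a, ha⟩ := eventually_atTop.1 (h₀ hs)
  obtain ⟨b, hb⟩ := eventually_atTop.1 (h₁ hs)
  refine eventually_atTop.2 ⟨2 * (a + b), fun n hn => ?_⟩
  obtain ⟨k, rfl | rfl⟩ := Nat.even_or_odd' n
  · exact ha k (by omega)
  · exact hb k (by omega)

lemma tendsto_of_mul_eq_const_mul {K ι : Type*} [NormedField K] {l : Filter ι} {x y z : ι → K}
    {c L : K} (h : ∀ i, x i * y i = c * z i) (hy : Tendsto y l (𝓝 L))
    (hz : Tendsto z l (𝓝 L)) (hL : L ≠ 0) : Tendsto x l (𝓝 c) := by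
  have hlim : Tendsto (fun i => c * z i / y i) l (𝓝 (c * L / L)) := (hz.const_mul c).div hy hL
  rw [mul_div_cancel_right₀ c hL] at hlim
  refine hlim.congr' ?_
  filter_upwards [hy.eventually_ne hL] with i hi
  rw [← h i, mul_div_cancel_right₀ _ hi]

namespace ThueMorseProduct

def tmSign (n : ℕ) : ℤ := (-1) ^ tm n

lemma tmSign_eq_neg_one_pow_digits_sum (n : ℕ) : tmSign n = (-1) ^ (Nat.digits 2 n).sum := by
  rw [tmSign, tm, ← neg_one_pow_eq_pow_mod_two]

lemma tmSign_two_mul (n : ℕ) : tmSign (2 * n) = tmSign n := by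
  rcases Nat.eq_zero_or_pos n with rfl | hn
  · rfl
  rw [tmSign_eq_neg_one_pow_digits_sum, tmSign_eq_neg_one_pow_digits_sum,
    Nat.digits_def' one_lt_two (by omega), List.sum_cons, Nat.mul_mod_right,
    Nat.mul_div_cancel_left n two_pos, zero_add]

lemma tmSign_two_mul_add_one (n : ℕ) : tmSign (2 * n + 1) = -tmSign n := by
  rw [tmSign_eq_neg_one_pow_digits_sum, tmSign_eq_neg_one_pow_digits_sum,
    Nat.digits_def' one_lt_two (by omega), List.sum_cons, Nat.mul_add_mod,
    show (2 * n + 1) / 2 = n by omega, pow_add]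
  simp

lemma tmSign_one : tmSign 1 = -1 := by
  simp [tmSign, tm]

noncomputable section

def ratio (a x : ℂ) : ℂ := (x + a) / (x + a + 1)

def factor (a x : ℂ) : ℂ :=
  ((x + a) * (2 * x + a + 1) ^ 2) / ((2 * x + a) * (2 * x + a + 2) * (x + a + 1))

def signedRatio (a : ℂ) (m : ℕ) : ℂ := ratio a m ^ tmSign m

end

variable {a : ℂ}

lemma ratio_eq_one_sub_inv {x : ℂ} (h : x + a + 1 ≠ 0) : ratio a x = 1 - (x + a + 1)⁻¹ := by
  rw [ratio, ← one_div, one_sub_div h, add_sub_cancel_right]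

lemma ratio_div_ratio_add_one {x : ℂ} (h : x + a + 1 ≠ 0) :
    ratio a x / ratio a (x + 1) = 1 - ((x + a + 1) ^ 2)⁻¹ := by
  rw [ratio, ratio, add_right_comm x 1 a, add_assoc (x + a) 1 1, one_add_one_eq_two]
  field_simp
  ring

lemma factor_mul_one_sub_inv_sq {x : ℂ} (h₁ : x + a + 1 ≠ 0) (h₂ : 2 * x + a ≠ 0)
    (h₃ : 2 * x + a + 1 ≠ 0) (h₄ : 2 * x + a + 2 ≠ 0) :
    factor a x * (1 - ((2 * x + a + 1) ^ 2)⁻¹) = ratio a x := by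
  rw [factor, ratio, ← one_div, one_sub_div (pow_ne_zero 2 h₃), div_mul_div_comm,
    div_eq_div_iff (by simp [*]) h₁]
  ring

section

variable (ha : ∀ k : ℕ, a ≠ -((k : ℂ) + 1))
include ha

lemma ne_zero_of_eq_natCast_add {z : ℂ} {m : ℕ} (hm : 0 < m) (hz : z = m + a) : z ≠ 0 := by
  obtain ⟨k, rfl⟩ := Nat.exists_eq_add_one_of_ne_zero hm.ne'
  rintro rfl
  push_cast at hz
  exact ha k (by linear_combination -hz)

lemma signedRatio_ne_zero {m : ℕ} (hm : 0 < m) : signedRatio a m ≠ 0 :=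
  zpow_ne_zero _ <| div_ne_zero (ne_zero_of_eq_natCast_add ha hm rfl)
    (ne_zero_of_eq_natCast_add ha (m := m + 1) (by omega) (by push_cast; ring))

lemma signedRatio_two_mul_mul (m : ℕ) :
    signedRatio a (2 * m) * signedRatio a (2 * m + 1)
      = (1 - ((2 * (m : ℂ) + a + 1) ^ 2)⁻¹) ^ tmSign m := by
  rw [signedRatio, signedRatio, tmSign_two_mul, tmSign_two_mul_add_one, zpow_neg, ← div_eq_mul_inv,
    ← div_zpow]
  push_cast
  rw [ratio_div_ratio_add_one]
  exact ne_zero_of_eq_natCast_add ha (m := 2 * m + 1) (by omega) (by push_cast; ring)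

lemma factor_zpow_mul_signedRatio {m : ℕ} (hm : 0 < m) :
    factor a m ^ tmSign m * (signedRatio a (2 * m) * signedRatio a (2 * m + 1))
      = signedRatio a m := by
  rw [signedRatio_two_mul_mul ha, ← mul_zpow, signedRatio]
  congr 1
  refine factor_mul_one_sub_inv_sq (ne_zero_of_eq_natCast_add ha (m := m + 1) (by omega) ?_)
    (ne_zero_of_eq_natCast_add ha (m := 2 * m) (by omega) ?_)
    (ne_zero_of_eq_natCast_add ha (m := 2 * m + 1) (by omega) ?_)
    (ne_zero_of_eq_natCast_add ha (m := 2 * m + 2) (by omega) ?_) <;> push_cast <;> ring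

lemma tendsto_signedRatio : Tendsto (signedRatio a) atTop (𝓝 1) := by
  have hinv : Tendsto (fun m : ℕ => ((m : ℂ) + a + 1)⁻¹) atTop (𝓝 0) := by
    simpa only [add_assoc, Function.comp_def] using tendsto_inv₀_cobounded.comp
      ((tendsto_add_const_cobounded (a + 1)).comp tendsto_natCast_atTop_cobounded)
  have hratio : Tendsto (fun m : ℕ => ratio a m) atTop (𝓝 1) := by
    have := (tendsto_const_nhds (x := (1 : ℂ))).sub hinv
    rw [sub_zero] at this
    refine this.congr fun m => ?_
    exact (ratio_eq_one_sub_inv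
      (ne_zero_of_eq_natCast_add ha (m := m + 1) (by omega) (by push_cast; ring))).symm
  exact tendsto_zpow_neg_one_pow hratio tm

lemma summable_norm_signedRatio_two_mul_mul_sub_one :
    Summable fun k : ℕ => ‖signedRatio a (2 * (k + 1)) * signedRatio a (2 * (k + 1) + 1) - 1‖ := by
  set v : ℕ → ℂ := fun k => ((2 * ((k + 1 : ℕ) : ℂ) + a + 1) ^ 2)⁻¹
  have hv : Summable fun k => ‖v k‖ := by
    have hinj : Function.Injective fun k : ℕ => 2 * (k + 1) + 1 := fun i j h => by
      simp only at h; omega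
    refine ((summable_norm_inv_natCast_add_sq a).comp_injective hinj).congr fun k => ?_
    simp only [v, Function.comp_apply]
    push_cast
    ring_nf
  refine .of_norm_bounded_eventually_nat (hv.mul_left 2) ?_
  filter_upwards [hv.tendsto_atTop_zero.eventually (ge_mem_nhds (by norm_num : (0 : ℝ) < 1 / 2))]
    with k hk
  have hvk : ‖(1 - v k) - 1‖ = ‖v k‖ := by rw [sub_sub_cancel_left, norm_neg]
  rw [norm_norm, signedRatio_two_mul_mul ha, ← hvk]
  exact norm_zpow_neg_one_pow_sub_one_le (hvk ▸ hk) (tm (k + 1))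

lemma tendsto_prod_signedRatio :
    ∃ L ≠ 0, Tendsto (fun M => ∏ m ∈ range M, signedRatio a (m + 1)) atTop (𝓝 L) := by
  set p : ℕ → ℂ := fun k => signedRatio a (2 * (k + 1)) * signedRatio a (2 * (k + 1) + 1)
  have hsum : Summable fun k => ‖p k - 1‖ := summable_norm_signedRatio_two_mul_mul_sub_one ha
  have hp : Multipliable p := by simpa using multipliable_one_add_of_summable hsum
  have hp₀ : ∏' k, p k ≠ 0 := by
    simpa using tprod_one_add_ne_zero_of_summable (f := fun k => p k - 1) (fun k => by
      rw [add_sub_cancel]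
      exact mul_ne_zero (signedRatio_ne_zero ha (m := 2 * (k + 1)) (by omega))
        (signedRatio_ne_zero ha (m := 2 * (k + 1) + 1) (by omega))) hsum
  have hodd : Tendsto (fun K => ∏ m ∈ range (2 * K + 1), signedRatio a (m + 1)) atTop
      (𝓝 (signedRatio a 1 * ∏' k, p k)) := by
    simp_rw [prod_range_two_mul_add_one]
    exact hp.tendsto_prod_tprod_nat.const_mul _
  have heven : Tendsto (fun K => ∏ m ∈ range (2 * K), signedRatio a (m + 1)) atTop
      (𝓝 (signedRatio a 1 * ∏' k, p k)) := by
    rw [← tendsto_add_atTop_iff_nat 1]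
    have := hodd.mul <| (tendsto_signedRatio ha).comp <|
      tendsto_atTop_mono (fun K => by omega : ∀ K, K ≤ 2 * K + 2) tendsto_id
    rw [mul_one] at this
    refine this.congr fun K => ?_
    rw [show 2 * (K + 1) = 2 * K + 1 + 1 by ring, prod_range_succ _ (2 * K + 1)]
    rfl
  exact ⟨_, mul_ne_zero (signedRatio_ne_zero ha one_pos) hp₀,
    tendsto_of_tendsto_two_mul_of_tendsto_two_mul_add_one heven hodd⟩

end

end ThueMorseProduct

open ThueMorseProduct

theorem prod_identity_ii (a : ℂ) (ha : ∀ k : ℕ, a ≠ -((k : ℂ) + 1)) :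
    Tendsto (fun N => ∏ n ∈ Finset.range N,
        (((((n : ℂ) + 1) + a) * (2 * ((n : ℂ) + 1) + a + 1) ^ 2) /
          ((2 * ((n : ℂ) + 1) + a) * (2 * ((n : ℂ) + 1) + a + 2) * (((n : ℂ) + 1) + a + 1)))
          ^ ((-1 : ℤ) ^ tm (n + 1)))
      atTop (𝓝 ((a + 2) / (a + 1))) := by
  obtain ⟨L, hL, hQ⟩ := tendsto_prod_signedRatio ha
  have hone : signedRatio a 1 = (a + 2) / (a + 1) := by
    rw [signedRatio, tmSign_one, zpow_neg_one, ratio, inv_div]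
    push_cast
    ring_nf
  rw [← hone]
  refine tendsto_of_mul_eq_const_mul (fun N => ?_)
    (hQ.comp (tendsto_atTop_mono (fun N => by omega : ∀ N, N ≤ 2 * N + 1) tendsto_id)) hQ hL
  have htel := prod_range_mul_prod_range_two_mul_add_one
    (fun m hm => factor_zpow_mul_signedRatio ha hm) N
  push_cast at htel
  exact htel
end

section
/- ∏_{n≥0} ((4n+1)/(4n+3))^{(-1)^{t_n}} = 1/2. -/
/-!
Write `ε n = (-1) ^ tm n`, `w n = ((4n+1)/(4n+3)) ^ ε n` and `q n = (2n/(2n+1)) ^ ε n`.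
Since `ε (2n) = ε n` and `ε (2n+1) = -ε n`, one has `w n * q (2n) * q (2n+1) = q n`, which
telescopes to `(∏_{n<N} w n) * ∏_{N≤k<2N} q k = w 0 * q 1 = 1/2`. The second factor tends
to `1`: the series `∑ log (q k)` converges, because `log (q k) → 0` and the two terms of each
pair `log (q (2j)) + log (q (2j+1))` cancel up to `O(1/j²)`.
-/

open Filter Finset Topology

lemma prod_range_mul_prod_Ico_two_mul {M : Type*} [CommMonoid M] {w q : ℕ → M}
    (h : ∀ n, w n * q (2 * n) * q (2 * n + 1) = q n) {N : ℕ} (hN : 1 ≤ N) :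
    (∏ k ∈ range N, w k) * ∏ k ∈ Ico N (2 * N), q k = w 0 * q 1 := by
  induction N, hN using Nat.le_induction with
  | base => simp
  | succ N hN ih =>
    rw [prod_range_succ, show 2 * (N + 1) = 2 * N + 1 + 1 by ring,
      prod_Ico_succ_top (by omega), prod_Ico_succ_top (by omega), ← ih,
      prod_eq_prod_Ico_succ_bot (by omega : N < 2 * N), ← h N]
    ac_rfl

lemma tendsto_of_tendsto_two_mul_of_tendsto_two_mul_add_one_s10 {X : Type*} {u : ℕ → X}
    {l : Filter X} (heven : Tendsto (fun k => u (2 * k)) atTop l)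
    (hodd : Tendsto (fun k => u (2 * k + 1)) atTop l) : Tendsto u atTop l := by
  intro s hs
  obtain ⟨a, ha⟩ := eventually_atTop.1 (heven hs)
  obtain ⟨b, hb⟩ := eventually_atTop.1 (hodd hs)
  refine eventually_atTop.2 ⟨2 * (a + b), fun n hn => ?_⟩
  obtain ⟨k, rfl | rfl⟩ := Nat.even_or_odd' n
  · exact ha k (by omega)
  · exact hb k (by omega)

lemma sum_range_two_mul {M : Type*} [AddCommMonoid M] (f : ℕ → M) (n : ℕ) :
    ∑ k ∈ range (2 * n), f k = ∑ j ∈ range n, (f (2 * j) + f (2 * j + 1)) := by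
  induction n with
  | zero => simp
  | succ n ih =>
    rw [show 2 * (n + 1) = 2 * n + 1 + 1 by ring, sum_range_succ, sum_range_succ, ih,
      sum_range_succ, add_assoc]

section TopologicalAddGroup

variable {G : Type*} [AddCommGroup G] [TopologicalSpace G] [IsTopologicalAddGroup G]
  {f : ℕ → G}

lemma tendsto_sum_range_of_hasSum_pairs {a : G} (hf : Tendsto f atTop (𝓝 0))
    (hpairs : HasSum (fun j => f (2 * j) + f (2 * j + 1)) a) :
    Tendsto (fun n => ∑ k ∈ range n, f k) atTop (𝓝 a) := by
  have heven : Tendsto (fun j => ∑ k ∈ range (2 * j), f k) atTop (𝓝 a) := by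
    simpa only [sum_range_two_mul] using hpairs.tendsto_sum_nat
  refine tendsto_of_tendsto_two_mul_of_tendsto_two_mul_add_one_s10 heven ?_
  simpa only [sum_range_succ, add_zero, Function.comp_def, id_eq] using
    heven.add (hf.comp (tendsto_id.const_mul_atTop' two_pos))

lemma tendsto_sum_Ico_two_mul {a : G}
    (hf : Tendsto (fun n => ∑ k ∈ range n, f k) atTop (𝓝 a)) :
    Tendsto (fun n => ∑ k ∈ Ico n (2 * n), f k) atTop (𝓝 0) := by
  simpa only [sum_Ico_eq_sub _ (Nat.le_mul_of_pos_left _ two_pos), sub_self, Function.comp_def,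
    id_eq] using
    (hf.comp (tendsto_id.const_mul_atTop' two_pos)).sub hf

end TopologicalAddGroup

def tmSign (n : ℕ) : ℤ := (-1) ^ tm n

lemma tmSign_eq_neg_one_pow_digits_sum (n : ℕ) : tmSign n = (-1) ^ (Nat.digits 2 n).sum :=
  (neg_one_pow_eq_pow_mod_two _).symm

lemma tmSign_two_mul (n : ℕ) : tmSign (2 * n) = tmSign n := by
  rcases Nat.eq_zero_or_pos n with rfl | hn
  · rfl
  · simp only [tmSign_eq_neg_one_pow_digits_sum,
      Nat.digits_def' one_lt_two (by omega : 0 < 2 * n), Nat.mul_mod_right,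
      Nat.mul_div_cancel_left n two_pos, List.sum_cons, zero_add]

lemma tmSign_two_mul_add_one (n : ℕ) : tmSign (2 * n + 1) = -tmSign n := by
  have hmod : (2 * n + 1) % 2 = 1 := by omega
  have hdiv : (2 * n + 1) / 2 = n := by omega
  simp only [tmSign_eq_neg_one_pow_digits_sum, Nat.digits_def' one_lt_two (Nat.succ_pos _), hmod,
    hdiv, List.sum_cons, pow_add, pow_one, neg_one_mul]

lemma abs_tmSign (n : ℕ) : |(tmSign n : ℝ)| = 1 := by
  simp [tmSign]

noncomputable def tmFactor (n : ℕ) : ℝ := ((4 * (n : ℝ) + 1) / (4 * (n : ℝ) + 3)) ^ tmSign n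

noncomputable def tmRatio (n : ℕ) : ℝ := (2 * (n : ℝ) / (2 * (n : ℝ) + 1)) ^ tmSign n

lemma tmFactor_mul_tmRatio_mul_tmRatio (n : ℕ) :
    tmFactor n * tmRatio (2 * n) * tmRatio (2 * n + 1) = tmRatio n := by
  rw [tmFactor, tmRatio, tmRatio, tmRatio, tmSign_two_mul, tmSign_two_mul_add_one, zpow_neg,
    ← inv_zpow, ← mul_zpow, ← mul_zpow]
  congr 1
  push_cast
  field_simp
  ring

lemma tmFactor_zero_mul_tmRatio_one : tmFactor 0 * tmRatio 1 = 1 / 2 := by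
  norm_num [tmFactor, tmRatio, tmSign, tm]

lemma tmRatio_pos {n : ℕ} (hn : 0 < n) : 0 < tmRatio n := by
  have hn' : (0 : ℝ) < n := by exact_mod_cast hn
  exact zpow_pos (by positivity) _

lemma log_tmRatio (n : ℕ) :
    Real.log (tmRatio n) = tmSign n * Real.log (2 * (n : ℝ) / (2 * (n : ℝ) + 1)) :=
  Real.log_zpow _ _

lemma tendsto_log_tmRatio : Tendsto (fun n => Real.log (tmRatio n)) atTop (𝓝 0) := by
  have hratio : Tendsto (fun n : ℕ => 2 * (n : ℝ) / (2 * (n : ℝ) + 1)) atTop (𝓝 1) := by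
    refine (tendsto_natCast_div_add_atTop (1 / 2 : ℝ)).congr fun n => ?_
    field_simp
  have hlog := ((Real.continuousAt_log one_ne_zero).tendsto.comp hratio).norm
  rw [Real.log_one, norm_zero] at hlog
  refine squeeze_zero_norm (fun n => le_of_eq ?_) hlog
  rw [log_tmRatio, Real.norm_eq_abs, abs_mul, abs_tmSign, one_mul, Function.comp_apply,
    Real.norm_eq_abs]

lemma abs_log_sub_log_le (x : ℝ) (hx : 0 < x) :
    |Real.log (4 * x / (4 * x + 1)) - Real.log ((4 * x + 2) / (4 * x + 3))| ≤ 1 / x ^ 2 := by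
  have hle : 4 * x / (4 * x + 1) ≤ (4 * x + 2) / (4 * x + 3) := by
    rw [div_le_div_iff₀ (by positivity) (by positivity)]
    nlinarith
  rw [abs_sub_comm, abs_of_nonneg (sub_nonneg.2 (Real.log_le_log (by positivity) hle)),
    ← Real.log_div (by positivity) (by positivity)]
  calc Real.log ((4 * x + 2) / (4 * x + 3) / (4 * x / (4 * x + 1)))
      ≤ (4 * x + 2) / (4 * x + 3) / (4 * x / (4 * x + 1)) - 1 :=
        Real.log_le_sub_one_of_pos (by positivity)
    _ = 2 / (4 * x * (4 * x + 3)) := by field_simp; ring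
    _ ≤ 1 / x ^ 2 := by
        rw [div_le_div_iff₀ (by positivity) (by positivity)]
        nlinarith

lemma summable_log_tmRatio_pairs :
    Summable fun j => Real.log (tmRatio (2 * j)) + Real.log (tmRatio (2 * j + 1)) := by
  refine (Real.summable_one_div_nat_pow.2 one_lt_two).of_norm_bounded_eventually ?_
  rw [Nat.cofinite_eq_atTop]
  filter_upwards [eventually_gt_atTop 0] with j hj
  have hpair : Real.log (tmRatio (2 * j)) + Real.log (tmRatio (2 * j + 1)) =
      tmSign j * (Real.log (4 * (j : ℝ) / (4 * j + 1)) -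
        Real.log ((4 * j + 2) / (4 * j + 3))) := by
    rw [log_tmRatio, log_tmRatio, tmSign_two_mul, tmSign_two_mul_add_one]
    push_cast
    ring_nf
  rw [hpair, Real.norm_eq_abs, abs_mul, abs_tmSign, one_mul]
  exact abs_log_sub_log_le j (by exact_mod_cast hj)

lemma tendsto_prod_Ico_two_mul_tmRatio :
    Tendsto (fun N => ∏ k ∈ Ico N (2 * N), tmRatio k) atTop (𝓝 1) := by
  obtain ⟨s, hs⟩ := summable_log_tmRatio_pairs
  have hsum :=
    tendsto_sum_Ico_two_mul (tendsto_sum_range_of_hasSum_pairs tendsto_log_tmRatio hs)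
  have hexp := (Real.continuous_exp.tendsto 0).comp hsum
  rw [Real.exp_zero] at hexp
  refine hexp.congr' ?_
  filter_upwards [eventually_gt_atTop 0] with N hN
  rw [Function.comp_apply, Real.exp_sum]
  exact prod_congr rfl fun k hk => Real.exp_log (tmRatio_pos ((mem_Ico.1 hk).1.trans_lt' hN))

theorem prod_b :
    Tendsto (fun N => ∏ n ∈ Finset.range N,
        (((4 * (n : ℝ) + 1) / (4 * (n : ℝ) + 3))) ^ ((-1 : ℤ) ^ tm n))
      atTop (𝓝 ((1 / 2 : ℝ))) := by
  change Tendsto (fun N => ∏ n ∈ range N, tmFactor n) atTop _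
  have hlim := (tendsto_const_nhds (x := (1 / 2 : ℝ))).div tendsto_prod_Ico_two_mul_tmRatio
    one_ne_zero
  rw [div_one] at hlim
  refine hlim.congr' ?_
  filter_upwards [eventually_gt_atTop 0] with N hN
  have hprod := prod_range_mul_prod_Ico_two_mul tmFactor_mul_tmRatio_mul_tmRatio hN
  rw [tmFactor_zero_mul_tmRatio_one] at hprod
  have hne : ∏ k ∈ Ico N (2 * N), tmRatio k ≠ 0 :=
    prod_ne_zero_iff.2 fun k hk => (tmRatio_pos ((mem_Ico.1 hk).1.trans_lt' hN)).ne'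
  exact (Pi.div_apply _ _ N).trans (eq_div_of_mul_eq hne hprod).symm
end
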